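/- arXiv:2408.09809 — 6 statements merged into one kernel-verified Lean document; each statement's English description precedes it below -/
import Mathlib

section
/- For every dimension d ≥ 1, the generating function G_d(x) = Σ_{μ≥0} N(d,μ) x^μ, viewed as a formal power series over ℤ, satisfies G_d(x) = G_1(x)^d · (1-x)^{d-1}, where G_1(x) = Σ_{ℓ≥0} f(ℓ+1) x^ℓ. -/
/-!
Split the node sets into the nodes that first appear at level `j`, `Δ j = S j \ S (j - 1)`.
By nestedness, `Γ(d, μ)` is the disjoint union of the boxes `Δ l₁ × ⋯ × Δ l_d` over all
`l ≥ 1` with `|l| ≤ d + μ`. Hence `N(d, μ)` is the `μ`-th partial sum of the coefficients of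
`P ^ d`, where `P = ∑ⱼ #Δ (j + 1) xʲ = (1 - x) G₁`, that is `G_d = P ^ d / (1 - x)`.
-/

/-- Multi-indices `i : Fin d → ℕ` with `i k ≥ 1` for all `k` and `∑ k, i k = d + μ`. -/
def smolyakIndices (d μ : ℕ) : Finset (Fin d → ℕ) :=
  (Fintype.piFinset fun _ => Finset.Icc 1 (d + μ)).filter fun i => ∑ k, i k = d + μ

/-- The Smolyak grid `Γ(d, μ)` based on the node sets `S`. -/
noncomputable def smolyakGrid (S : ℕ → Finset ℝ) (d μ : ℕ) : Finset (Fin d → ℝ) :=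
  (smolyakIndices d μ).biUnion fun i => Fintype.piFinset fun k => S (i k)

/-- `N(d, μ)`: the number of nodes in the Smolyak grid. -/
noncomputable def smolyakCard (S : ℕ → Finset ℝ) (d μ : ℕ) : ℕ :=
  (smolyakGrid S d μ).card

open Finset PowerSeries

section NewNodes

variable {α : Type*} [DecidableEq α]

-- `S 0` plays no role in the Smolyak grid, so level `1` keeps all of `S 1`.
def newNodes (S : ℕ → Finset α) : ℕ → Finset α
  | 0 => ∅
  | 1 => S 1
  | j + 2 => S (j + 2) \ S (j + 1)

variable {S : ℕ → Finset α}

lemma newNodes_succ {j : ℕ} (hj : 1 ≤ j) : newNodes S (j + 1) = S (j + 1) \ S j := by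
  obtain ⟨j, rfl⟩ := Nat.exists_eq_add_of_le' hj
  rfl

lemma newNodes_subset : ∀ j, newNodes S j ⊆ S j
  | 0 => empty_subset _
  | 1 => Subset.rfl
  | _ + 2 => sdiff_subset

lemma exists_mem_newNodes_of_mem {j : ℕ} (hj : 1 ≤ j) {x : α} (hx : x ∈ S j) :
    ∃ l ∈ Icc 1 j, x ∈ newNodes S l := by
  induction j, hj using Nat.le_induction with
  | base => exact ⟨1, by simp, hx⟩
  | succ j hj ih =>
    by_cases hxj : x ∈ S j
    · obtain ⟨l, hl, hxl⟩ := ih hxj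
      exact ⟨l, Icc_subset_Icc_right j.le_succ hl, hxl⟩
    · exact ⟨j + 1, by simp, by rw [newNodes_succ hj]; exact mem_sdiff.mpr ⟨hx, hxj⟩⟩

variable (hS : MonotoneOn S (Set.Ici 1))
include hS

lemma disjoint_newNodes {l l' : ℕ} (hl : 1 ≤ l) (hll' : l < l') :
    Disjoint (newNodes S l) (newNodes S l') := by
  obtain ⟨j, rfl⟩ : ∃ j, l' = j + 1 := ⟨l' - 1, by omega⟩
  rw [newNodes_succ (by omega)]
  exact disjoint_sdiff.mono_left
    ((newNodes_subset l).trans (hS hl (show 1 ≤ j by omega) (by omega)))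

lemma card_newNodes_succ {j : ℕ} (hj : 1 ≤ j) :
    ((newNodes S (j + 1)).card : ℤ) = (S (j + 1)).card - (S j).card := by
  have hsub : S j ⊆ S (j + 1) := hS hj (show 1 ≤ j + 1 by omega) j.le_succ
  rw [newNodes_succ hj, card_sdiff_of_subset hsub, Nat.cast_sub (card_le_card hsub)]

lemma pairwiseDisjoint_piFinset_newNodes {ι : Type*} [Fintype ι] [DecidableEq ι]
    {L : Set (ι → ℕ)} (hL : ∀ l ∈ L, ∀ k, 1 ≤ l k) :
    L.PairwiseDisjoint fun l => Fintype.piFinset fun k => newNodes S (l k) := by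
  intro l hl l' hl' hne
  obtain ⟨k, hk⟩ := Function.ne_iff.mp hne
  refine disjoint_left.mpr fun x hx hx' => ?_
  rw [Fintype.mem_piFinset] at hx hx'
  rcases hk.lt_or_gt with h | h
  · exact disjoint_left.mp (disjoint_newNodes hS (hL l hl k) h) (hx k) (hx' k)
  · exact disjoint_left.mp (disjoint_newNodes hS (hL l' hl' k) h) (hx' k) (hx k)

end NewNodes

lemma monotoneOn_Ici_one_of_subset_succ {α : Type*} {S : ℕ → Finset α}
    (hS : ∀ k, 1 ≤ k → S k ⊆ S (k + 1)) : MonotoneOn S (Set.Ici 1) :=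
  monotoneOn_of_le_succ Set.ordConnected_Ici fun k _ hk _ => hS k hk

section SmolyakIndices

lemma mem_smolyakIndices {d μ : ℕ} {i : Fin d → ℕ} :
    i ∈ smolyakIndices d μ ↔ (∀ k, 1 ≤ i k) ∧ ∑ k, i k = d + μ := by
  simp only [smolyakIndices, mem_filter, Fintype.mem_piFinset, mem_Icc]
  refine ⟨fun ⟨hi, hsum⟩ => ⟨fun k => (hi k).1, hsum⟩, fun ⟨hi, hsum⟩ => ⟨fun k => ⟨hi k, ?_⟩, hsum⟩⟩
  exact hsum ▸ single_le_sum (fun k _ => Nat.zero_le (i k)) (mem_univ k)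

lemma mem_biUnion_smolyakIndices {d μ : ℕ} {i : Fin d → ℕ} :
    i ∈ (range (μ + 1)).biUnion (smolyakIndices d) ↔ (∀ k, 1 ≤ i k) ∧ ∑ k, i k ≤ d + μ := by
  simp only [mem_biUnion, mem_range, mem_smolyakIndices]
  constructor
  · rintro ⟨ν, hν, hi, hsum⟩
    exact ⟨hi, by omega⟩
  · rintro ⟨hi, hsum⟩
    have : d ≤ ∑ k, i k := by
      simpa using sum_le_sum fun k (_ : k ∈ univ) => hi k
    exact ⟨∑ k, i k - d, by omega, hi, by omega⟩

lemma pairwiseDisjoint_smolyakIndices (d : ℕ) (s : Set ℕ) :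
    s.PairwiseDisjoint (smolyakIndices d) := by
  intro ν _ ν' _ hne
  refine disjoint_left.mpr fun i hi hi' => hne ?_
  rw [mem_smolyakIndices] at hi hi'
  omega

lemma exists_mem_smolyakIndices_le {d μ : ℕ} (hd : 1 ≤ d) {l : Fin d → ℕ}
    (hl : l ∈ (range (μ + 1)).biUnion (smolyakIndices d)) :
    ∃ i ∈ smolyakIndices d μ, l ≤ i := by
  rw [mem_biUnion_smolyakIndices] at hl
  refine ⟨l + Pi.single ⟨0, hd⟩ (d + μ - ∑ k, l k), ?_, le_self_add⟩
  simp only [mem_smolyakIndices, Pi.add_apply, sum_add_distrib, Fintype.sum_pi_single']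
  exact ⟨fun k => (hl.1 k).trans (Nat.le_add_right _ _), by omega⟩

end SmolyakIndices

lemma smolyakGrid_eq_biUnion_newNodes {S : ℕ → Finset ℝ} (hS : MonotoneOn S (Set.Ici 1))
    {d : ℕ} (hd : 1 ≤ d) (μ : ℕ) :
    smolyakGrid S d μ = ((range (μ + 1)).biUnion (smolyakIndices d)).biUnion
      fun l => Fintype.piFinset fun k => newNodes S (l k) := by
  ext x
  rw [smolyakGrid, mem_biUnion, mem_biUnion]
  simp only [Fintype.mem_piFinset]
  constructor
  · rintro ⟨i, hi, hx⟩
    rw [mem_smolyakIndices] at hi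
    choose l hl hxl using fun k => exists_mem_newNodes_of_mem (hi.1 k) (hx k)
    simp only [mem_Icc] at hl
    refine ⟨l, mem_biUnion_smolyakIndices.mpr ⟨fun k => (hl k).1, ?_⟩, hxl⟩
    exact hi.2 ▸ sum_le_sum fun k _ => (hl k).2
  · rintro ⟨l, hl, hx⟩
    obtain ⟨i, hi, hli⟩ := exists_mem_smolyakIndices_le hd hl
    have hl1 := (mem_biUnion_smolyakIndices.mp hl).1
    exact ⟨i, hi, fun k => hS (hl1 k) ((hl1 k).trans (hli k)) (hli k) (newNodes_subset _ (hx k))⟩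

lemma smolyakCard_eq_sum_prod_card_newNodes {S : ℕ → Finset ℝ} (hS : MonotoneOn S (Set.Ici 1))
    {d : ℕ} (hd : 1 ≤ d) (μ : ℕ) :
    smolyakCard S d μ =
      ∑ ν ∈ range (μ + 1), ∑ l ∈ smolyakIndices d ν, ∏ k, (newNodes S (l k)).card := by
  rw [smolyakCard, smolyakGrid_eq_biUnion_newNodes hS hd, card_biUnion, sum_biUnion]
  · simp only [Fintype.card_piFinset]
  · exact pairwiseDisjoint_smolyakIndices d _
  · exact pairwiseDisjoint_piFinset_newNodes hS fun l hl => (mem_biUnion_smolyakIndices.mp hl).1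

lemma coeff_pow_mk_succ {R : Type*} [CommSemiring R] (c : ℕ → R) (d n : ℕ) :
    coeff n ((PowerSeries.mk fun j => c (j + 1)) ^ d) =
      ∑ i ∈ smolyakIndices d n, ∏ k, c (i k) := by
  rw [← Fin.prod_const, coeff_prod]
  refine sum_nbij' (fun l k => l k + 1) (fun i => Finsupp.equivFunOnFinite.symm (i - 1))
    (fun l hl => ?_) (fun i hi => ?_) (fun l _ => ?_) (fun i hi => ?_) (fun l _ => ?_)
  · rw [mem_finsuppAntidiag] at hl
    rw [mem_smolyakIndices, sum_add_distrib, hl.1]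
    simp [add_comm]
  · rw [mem_smolyakIndices] at hi
    rw [mem_finsuppAntidiag]
    refine ⟨?_, subset_univ _⟩
    simp only [Finsupp.equivFunOnFinite_symm_apply_apply, Pi.sub_apply, Pi.one_apply]
    rw [sum_tsub_distrib _ fun k _ => hi.1 k, hi.2]
    simp
  · ext k
    simp
  · ext k
    simpa using Nat.sub_add_cancel ((mem_smolyakIndices.mp hi).1 k)
  · simp only [coeff_mk]

lemma coeff_mul_mk_one {R : Type*} [Semiring R] (φ : PowerSeries R) (n : ℕ) :
    coeff n (φ * PowerSeries.mk 1) = ∑ i ∈ range (n + 1), coeff i φ := by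
  simp [coeff_mul, Nat.sum_antidiagonal_eq_sum_range_succ_mk]

lemma mk_card_mul_one_sub_X {α : Type*} [DecidableEq α] {S : ℕ → Finset α}
    (hS : MonotoneOn S (Set.Ici 1)) :
    (PowerSeries.mk fun j => ((S (j + 1)).card : ℤ)) * (1 - X) =
      PowerSeries.mk fun j => ((newNodes S (j + 1)).card : ℤ) := by
  ext n
  rw [mul_sub, mul_one, map_sub, coeff_mk, coeff_mk]
  cases n with
  | zero => simp [newNodes]
  | succ n => rw [coeff_succ_mul_X, coeff_mk, card_newNodes_succ hS (by omega)]

theorem smolyak_generatingFunction_general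
    (f : ℕ → ℕ)
    (S : ℕ → Finset ℝ) (hS_nested : ∀ k, 1 ≤ k → S k ⊆ S (k + 1))
    (hS_card : ∀ k, 1 ≤ k → (S k).card = f k)
    (d : ℕ) (hd : 1 ≤ d) :
    (PowerSeries.mk fun μ => (smolyakCard S d μ : ℤ)) =
      (PowerSeries.mk fun ℓ => (f (ℓ + 1) : ℤ)) ^ d * (1 - PowerSeries.X) ^ (d - 1) := by
  have hS := monotoneOn_Ici_one_of_subset_succ hS_nested
  have hG₁ : (PowerSeries.mk fun ℓ => (f (ℓ + 1) : ℤ)) =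
      PowerSeries.mk fun ℓ => ((S (ℓ + 1)).card : ℤ) := by
    simp only [hS_card _ (Nat.le_add_left 1 _)]
  have hG : (PowerSeries.mk fun μ => (smolyakCard S d μ : ℤ)) =
      (PowerSeries.mk fun j => ((newNodes S (j + 1)).card : ℤ)) ^ d * PowerSeries.mk 1 := by
    ext μ
    simp only [coeff_mul_mk_one, coeff_pow_mk_succ fun l => ((newNodes S l).card : ℤ), coeff_mk,
      smolyakCard_eq_sum_prod_card_newNodes hS hd, Nat.cast_sum, Nat.cast_prod]
  obtain ⟨e, rfl⟩ := Nat.exists_eq_add_of_le' hd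
  rw [hG, hG₁, ← mk_card_mul_one_sub_X hS, mul_pow, pow_succ (1 - X), Nat.add_sub_cancel,
    mul_assoc, mul_assoc, mul_comm (1 - X), mk_one_mul_one_sub_eq_one, mul_one]

/-- The generating function `G_d(x) = ∑_μ N(d,μ) xᵘ` of a nested Smolyak grid satisfies
`G_d(x) = G_1(x)^d (1 - x)^(d-1)` where `G_1(x) = ∑_ℓ f(ℓ+1) xˡ`. -/
theorem smolyak_generatingFunction
    (f : ℕ → ℕ) (hf_mono : ∀ k, 1 ≤ k → f k ≤ f (k + 1)) (hf_pos : ∀ k, 1 ≤ k → 1 ≤ f k)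
    (S : ℕ → Finset ℝ) (hS_nested : ∀ k, 1 ≤ k → S k ⊆ S (k + 1))
    (hS_card : ∀ k, 1 ≤ k → (S k).card = f k)
    (d : ℕ) (hd : 1 ≤ d) :
    (PowerSeries.mk fun μ => (smolyakCard S d μ : ℤ)) =
      (PowerSeries.mk fun ℓ => (f (ℓ + 1) : ℤ)) ^ d * (1 - PowerSeries.X) ^ (d - 1) :=
  smolyak_generatingFunction_general f S hS_nested hS_card d hd
end

section
/- For every d ≥ 1 and μ ≥ 0, under the identification of Fin (d+1) → ℝ with (Fin d → ℝ) × ℝ, the Smolyak grid Γ(d+1,μ) is the union of Γ(d,μ) × S(1) together with the sets Γ(d,μ−ℓ) × (S(ℓ+1) \ S(ℓ)) for ℓ = 1,…,μ, and this union is pairwise disjoint. -/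
lemma mem_smolyakGrid {S : ℕ → Finset ℝ} {d μ : ℕ} {x : Fin d → ℝ} :
    x ∈ smolyakGrid S d μ ↔
      ∃ i : Fin d → ℕ, (∀ k, 1 ≤ i k) ∧ (∑ k, i k = d + μ) ∧ ∀ k, x k ∈ S (i k) := by
  simp only [smolyakGrid, Finset.mem_biUnion, smolyakIndices, Finset.mem_filter,
    Fintype.mem_piFinset, Finset.mem_Icc]
  constructor
  · rintro ⟨i, ⟨hi, hsum⟩, hx⟩
    exact ⟨i, fun k => (hi k).1, hsum, hx⟩
  · rintro ⟨i, h1, hsum, hx⟩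
    refine ⟨i, ⟨fun k => ⟨h1 k, ?_⟩, hsum⟩, hx⟩
    calc i k ≤ ∑ j, i j :=
          Finset.single_le_sum (fun j _ => Nat.zero_le _) (Finset.mem_univ k)
      _ = d + μ := hsum

lemma S_mono_aux {S : ℕ → Finset ℝ} (hS : ∀ k, 1 ≤ k → S k ⊆ S (k + 1)) :
    ∀ {j k : ℕ}, 1 ≤ j → j ≤ k → S j ⊆ S k := by
  intro j k hj hjk
  induction hjk with
  | refl => exact subset_rfl
  | @step k h ih => exact ih.trans (hS k (hj.trans h))

lemma grid_mono {S : ℕ → Finset ℝ} (hS : ∀ k, 1 ≤ k → S k ⊆ S (k + 1))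
    {d : ℕ} (hd : 1 ≤ d) {μ₁ μ₂ : ℕ} (h : μ₁ ≤ μ₂) :
    smolyakGrid S d μ₁ ⊆ smolyakGrid S d μ₂ := by
  intro x hx
  rw [mem_smolyakGrid] at hx ⊢
  obtain ⟨i, h1, hsum, hxm⟩ := hx
  haveI : NeZero d := ⟨by omega⟩
  have hz : (0 : Fin d) ∈ Finset.univ := Finset.mem_univ _
  have hsd : ∑ j, i j = ∑ j ∈ Finset.univ \ {0}, i j + i 0 :=
    (Finset.sum_eq_sum_sdiff_singleton_add hz i)
  refine ⟨Function.update i 0 (i 0 + (μ₂ - μ₁)), ?_, ?_, ?_⟩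
  · intro k
    rcases eq_or_ne k 0 with rfl | hk
    · rw [Function.update_self]
      exact le_trans (h1 0) (Nat.le_add_right _ _)
    · rw [Function.update_of_ne hk]; exact h1 k
  · rw [Finset.sum_update_of_mem hz]
    have h2 : μ₁ + (μ₂ - μ₁) = μ₂ := Nat.add_sub_cancel' h
    omega
  · intro k
    rcases eq_or_ne k 0 with rfl | hk
    · rw [Function.update_self]
      exact S_mono_aux hS (h1 0) (Nat.le_add_right _ _) (hxm 0)
    · rw [Function.update_of_ne hk]; exact hxm k

/-- Under the identification of `Fin (d+1) → ℝ` with `(Fin d → ℝ) × ℝ`, the Smolyak grid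
`Γ(d+1, μ)` decomposes as the pairwise disjoint union of `Γ(d, μ) × S 1` (the `ℓ = 0` piece)
and the pieces `Γ(d, μ - ℓ) × (S (ℓ+1) \ S ℓ)` for `ℓ = 1, …, μ`. -/
theorem smolyakGrid_succ_decomposition
    (f : ℕ → ℕ) (hf_mono : ∀ k, 1 ≤ k → f k ≤ f (k + 1)) (hf_pos : ∀ k, 1 ≤ k → 1 ≤ f k)
    (S : ℕ → Finset ℝ) (hS_nested : ∀ k, 1 ≤ k → S k ⊆ S (k + 1))
    (hS_card : ∀ k, 1 ≤ k → (S k).card = f k)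
    (d μ : ℕ) (hd : 1 ≤ d) :
    ((smolyakGrid S (d + 1) μ).image
        (fun x => ((fun k : Fin d => x k.castSucc), x (Fin.last d))) =
      (Finset.range (μ + 1)).biUnion (fun ℓ =>
        if ℓ = 0 then smolyakGrid S d μ ×ˢ S 1
        else smolyakGrid S d (μ - ℓ) ×ˢ (S (ℓ + 1) \ S ℓ)))
    ∧ ((Finset.range (μ + 1) : Finset ℕ) : Set ℕ).PairwiseDisjoint (fun ℓ =>
        if ℓ = 0 then smolyakGrid S d μ ×ˢ S 1
        else smolyakGrid S d (μ - ℓ) ×ˢ (S (ℓ + 1) \ S ℓ)) := by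
  classical
  constructor
  · ext ⟨a, b⟩
    simp only [Finset.mem_image, Finset.mem_biUnion, Finset.mem_range, Prod.mk.injEq]
    constructor
    · rintro ⟨x, hx, rfl, rfl⟩
      rw [mem_smolyakGrid] at hx
      obtain ⟨i, h1, hsum, hmem⟩ := hx
      set m := i (Fin.last d) with hm
      have hm1 : 1 ≤ m := h1 _
      have hsplit : (∑ k : Fin d, i k.castSucc) + m = d + 1 + μ := by
        rw [← Fin.sum_univ_castSucc]; exact hsum
      have hsge : d ≤ ∑ k : Fin d, i k.castSucc := by
        calc d = ∑ _k : Fin d, 1 := by simp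
          _ ≤ _ := Finset.sum_le_sum fun k _ => h1 _
      have hmμ : m ≤ μ + 1 := by omega
      have hbm : x (Fin.last d) ∈ S m := hmem _
      have hex : ∃ n, x (Fin.last d) ∈ S (n + 1) := ⟨m - 1, by
        have h' : m - 1 + 1 = m := by omega
        rw [h']; exact hbm⟩
      set ℓ := Nat.find hex with hℓdef
      have hℓspec : x (Fin.last d) ∈ S (ℓ + 1) := Nat.find_spec hex
      have hℓle : ℓ ≤ m - 1 := Nat.find_le (by
        have h' : m - 1 + 1 = m := by omega
        rw [h']; exact hbm)
      have hℓμ : ℓ ≤ μ := by omega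
      have ha' : (fun k : Fin d => x k.castSucc) ∈ smolyakGrid S d (μ - ℓ) := by
        apply grid_mono hS_nested hd (show μ - (m - 1) ≤ μ - ℓ by omega)
        rw [mem_smolyakGrid]
        refine ⟨fun k => i k.castSucc, fun k => h1 _, ?_, fun k => hmem _⟩
        show (∑ k : Fin d, i k.castSucc) = d + (μ - (m - 1))
        omega
      refine ⟨ℓ, by omega, ?_⟩
      by_cases hℓ0 : ℓ = 0
      · rw [if_pos hℓ0]
        rw [Finset.mem_product]
        refine ⟨by simpa [hℓ0] using ha', ?_⟩
        simpa [hℓ0] using hℓspec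
      · rw [if_neg hℓ0, Finset.mem_product]
        refine ⟨ha', Finset.mem_sdiff.2 ⟨hℓspec, fun hb => ?_⟩⟩
        have hlt : ℓ - 1 < ℓ := by omega
        apply Nat.find_min hex hlt
        have h' : ℓ - 1 + 1 = ℓ := by omega
        rw [h']; exact hb
    · rintro ⟨ℓ, hℓ, hmem⟩
      have hℓμ : ℓ ≤ μ := by omega
      have key : a ∈ smolyakGrid S d (μ - ℓ) ∧ b ∈ S (ℓ + 1) := by
        by_cases hℓ0 : ℓ = 0
        · rw [if_pos hℓ0, Finset.mem_product] at hmem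
          subst hℓ0
          exact ⟨by simpa using hmem.1, hmem.2⟩
        · rw [if_neg hℓ0, Finset.mem_product] at hmem
          exact ⟨hmem.1, (Finset.mem_sdiff.1 hmem.2).1⟩
      obtain ⟨ha, hb⟩ := key
      rw [mem_smolyakGrid] at ha
      obtain ⟨i, h1, hsum, hmemi⟩ := ha
      refine ⟨Fin.snoc a b, ?_, by funext k; simp, by simp⟩
      rw [mem_smolyakGrid]
      refine ⟨Fin.snoc i (ℓ + 1), ?_, ?_, ?_⟩
      · intro k
        refine Fin.lastCases ?_ (fun k => ?_) k
        · simp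
        · simpa using h1 k
      · rw [Fin.sum_univ_castSucc]
        simp only [Fin.snoc_castSucc, Fin.snoc_last]
        omega
      · intro k
        refine Fin.lastCases ?_ (fun k => ?_) k
        · simpa using hb
        · simpa using hmemi k
  · have key : ∀ ℓ₁ ℓ₂ : ℕ, ℓ₁ < ℓ₂ → ℓ₂ ≤ μ →
        Disjoint (if ℓ₁ = 0 then smolyakGrid S d μ ×ˢ S 1
          else smolyakGrid S d (μ - ℓ₁) ×ˢ (S (ℓ₁ + 1) \ S ℓ₁))
          (if ℓ₂ = 0 then smolyakGrid S d μ ×ˢ S 1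
          else smolyakGrid S d (μ - ℓ₂) ×ˢ (S (ℓ₂ + 1) \ S ℓ₂)) := by
      intro ℓ₁ ℓ₂ hlt hle
      have hℓ₂0 : ℓ₂ ≠ 0 := by omega
      rw [if_neg hℓ₂0, Finset.disjoint_left]
      rintro ⟨u, v⟩ h1 h2
      rw [Finset.mem_product] at h2
      have hv2 : v ∉ S ℓ₂ := (Finset.mem_sdiff.1 h2.2).2
      apply hv2
      by_cases hℓ₁0 : ℓ₁ = 0
      · rw [if_pos hℓ₁0, Finset.mem_product] at h1
        exact S_mono_aux hS_nested le_rfl (by omega) h1.2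
      · rw [if_neg hℓ₁0, Finset.mem_product] at h1
        exact S_mono_aux hS_nested (by omega) (by omega)
          (Finset.mem_sdiff.1 h1.2).1
    intro ℓ₁ h1 ℓ₂ h2 hne
    simp only [Finset.coe_range, Set.mem_Iio] at *
    rcases lt_or_gt_of_ne hne with h | h
    · exact key ℓ₁ ℓ₂ h (by
        have := h2; omega)
    · exact (key ℓ₂ ℓ₁ h (by
        have := h1; omega)).symm
end

section
/- Suppose the growth function is f(k) = 2^{k−1}. Then for every d ≥ 1 and μ ≥ 0, the cardinality of the nested Smolyak grid is N(d,μ) = Σ_{j=0}^{min(d−1,μ)} C(d−1,j) · C(μ,j) · 2^{μ−j}. -/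
open Finset

noncomputable def lev (S : ℕ → Finset ℝ) (t : ℝ) : ℕ := sInf {k | 1 ≤ k ∧ t ∈ S k}

section Struct
variable {S : ℕ → Finset ℝ} (hS : ∀ k, 1 ≤ k → S k ⊆ S (k + 1))

include hS in
lemma S_mono : ∀ a b, 1 ≤ a → a ≤ b → S a ⊆ S b := by
  intro a b ha hab
  induction b with
  | zero => exact absurd hab (by omega)
  | succ n ih =>
    rcases Nat.lt_or_ge a (n+1) with h | h
    · exact (ih (by omega)).trans (hS n (by omega))
    · have : a = n + 1 := by omega
      subst this; exact fun _ h => h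

lemma lev_le {t : ℝ} {k : ℕ} (hk : 1 ≤ k) (h : t ∈ S k) : lev S t ≤ k :=
  Nat.sInf_le ⟨hk, h⟩

lemma lev_spec {t : ℝ} {k : ℕ} (hk : 1 ≤ k) (h : t ∈ S k) :
    1 ≤ lev S t ∧ t ∈ S (lev S t) :=
  Nat.sInf_mem (⟨k, hk, h⟩ : {k | 1 ≤ k ∧ t ∈ S k}.Nonempty)

include hS in
lemma grid_eq (d μ : ℕ) (hd : 1 ≤ d) :
    smolyakGrid S d μ =
      (Fintype.piFinset fun _ : Fin d => S (μ + 1)).filter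
        fun x => ∑ k, lev S (x k) ≤ d + μ := by
  ext x
  simp only [smolyakGrid, smolyakIndices, mem_biUnion, mem_filter,
    Fintype.mem_piFinset, mem_Icc]
  constructor
  · rintro ⟨i, ⟨hi, hsum⟩, hx⟩
    have hub : ∀ k, i k ≤ μ + 1 := by
      intro k
      have h1 : ∑ j ∈ (univ : Finset (Fin d)).erase k, i j + i k = ∑ j, i j :=
        Finset.sum_erase_add _ _ (mem_univ k)
      have h2 : (d - 1 : ℕ) ≤ ∑ j ∈ (univ : Finset (Fin d)).erase k, i j := by
        calc (d - 1 : ℕ) = ((univ : Finset (Fin d)).erase k).card := by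
              rw [Finset.card_erase_of_mem (mem_univ k)]; simp
          _ = ∑ j ∈ (univ : Finset (Fin d)).erase k, 1 := (Finset.card_eq_sum_ones _)
          _ ≤ _ := Finset.sum_le_sum fun j _ => (hi j).1
      omega
    constructor
    · intro k
      exact S_mono hS (i k) (μ+1) (hi k).1 (hub k) (hx k)
    · calc ∑ k, lev S (x k) ≤ ∑ k, i k :=
            Finset.sum_le_sum fun k _ => lev_le (hi k).1 (hx k)
        _ = d + μ := hsum
  · rintro ⟨hx, hsum⟩
    set l : Fin d → ℕ := fun k => lev S (x k) with hl
    have hsum' : ∑ k, l k ≤ d + μ := hsum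
    have hspec : ∀ k, 1 ≤ l k ∧ x k ∈ S (l k) := fun k => lev_spec (by omega) (hx k)
    have hub : ∀ k, l k ≤ μ + 1 := fun k => lev_le (by omega) (hx k)
    have k0 : Fin d := ⟨0, hd⟩
    have hl0 : l k0 ≤ ∑ k, l k :=
      Finset.single_le_sum (fun _ _ => Nat.zero_le _) (mem_univ k0)
    refine ⟨Function.update l k0 (l k0 + (d + μ - ∑ k, l k)), ⟨?_, ?_⟩, ?_⟩
    · intro k
      by_cases hk : k = k0
      · subst hk
        rw [Function.update_self]
        have := (hspec k).1
        omega
      · rw [Function.update_of_ne hk]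
        exact ⟨(hspec k).1, (hub k).trans (by omega)⟩
    · rw [Finset.sum_update_of_mem (mem_univ k0)]
      simp only [← Finset.erase_eq]
      have h1 : ∑ j ∈ (univ : Finset (Fin d)).erase k0, l j + l k0 = ∑ j, l j :=
        Finset.sum_erase_add _ _ (mem_univ k0)
      omega
    · intro k
      by_cases hk : k = k0
      · subst hk
        rw [Function.update_self]
        exact S_mono hS (l k) _ (hspec k).1 (by omega) (hspec k).2
      · rw [Function.update_of_ne hk]
        exact (hspec k).2
end Struct

def hwt : ℕ → ℕ := fun m => if m = 0 then 1 else 2 ^ (m - 1)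

def Bsum (e μ : ℕ) : ℕ := ∑ j ∈ range (μ + 1), e.choose j * μ.choose j * 2 ^ (μ - j)

lemma Bsum_zero (e : ℕ) : Bsum e 0 = 1 := by simp [Bsum]

lemma Bsum_zero_left (μ : ℕ) : Bsum 0 μ = 2 ^ μ := by
  rw [Bsum, Finset.sum_eq_single 0]
  · simp
  · intro j hj hj0
    rw [Nat.choose_eq_zero_of_lt (by omega)]
    ring
  · intro h; simp at h

/-- L1 -/
lemma Bsum_succ (e ν : ℕ) :
    Bsum e (ν + 1) = 2 * Bsum e ν +
      ∑ i ∈ range (ν + 1), e.choose (i + 1) * ν.choose i * 2 ^ (ν - i) := by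
  have key : ∑ j ∈ range (ν + 1), e.choose (j+1) * ν.choose (j+1) * 2 ^ (ν - j)
      + 2 ^ (ν + 1) = 2 * Bsum e ν := by
    have e1 : 2 * Bsum e ν
        = ∑ j ∈ range (ν + 1), 2 * (e.choose j * ν.choose j * 2 ^ (ν - j)) := by
      rw [Bsum, Finset.mul_sum]
    rw [e1, Finset.sum_range_succ' (fun j => 2 * (e.choose j * ν.choose j * 2 ^ (ν - j))) ν]
    have e2 : ∀ j ∈ range ν, 2 * (e.choose (j+1) * ν.choose (j+1) * 2 ^ (ν - (j+1)))
        = e.choose (j+1) * ν.choose (j+1) * 2 ^ (ν - j) := by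
      intro j hj
      simp only [mem_range] at hj
      have : ν - j = (ν - (j+1)) + 1 := by omega
      rw [this, pow_succ]; ring
    rw [Finset.sum_congr rfl e2]
    have e3 : ∑ j ∈ range (ν+1), e.choose (j+1) * ν.choose (j+1) * 2 ^ (ν - j)
        = ∑ j ∈ range ν, e.choose (j+1) * ν.choose (j+1) * 2 ^ (ν - j) := by
      rw [Finset.sum_range_succ, Nat.choose_eq_zero_of_lt (show ν < ν+1 by omega)]
      simp
    rw [e3]
    simp [pow_succ]
    ring
  have h1 : Bsum e (ν + 1) =
      (∑ j ∈ range (ν + 1), e.choose (j+1) * (ν+1).choose (j+1) * 2 ^ (ν + 1 - (j+1)))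
        + 2 ^ (ν+1) := by
    rw [Bsum, Finset.sum_range_succ'
      (fun j => e.choose j * (ν+1).choose j * 2 ^ (ν + 1 - j)) (ν+1)]
    simp
  have h3 : ∀ j ∈ range (ν+1), e.choose (j+1) * (ν+1).choose (j+1) * 2 ^ (ν + 1 - (j+1))
      = e.choose (j+1) * ν.choose j * 2 ^ (ν - j)
        + e.choose (j+1) * ν.choose (j+1) * 2 ^ (ν - j) := by
    intro j hj
    rw [Nat.choose_succ_succ]
    have : ν + 1 - (j+1) = ν - j := by omega
    rw [this]; ring
  rw [h1, Finset.sum_congr rfl h3, Finset.sum_add_distrib]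
  omega

/-- L2 -/
lemma Wsucc (e ν : ℕ) :
    ∑ i ∈ range (ν + 1), (e+1).choose (i + 1) * ν.choose i * 2 ^ (ν - i)
      = (∑ i ∈ range (ν + 1), e.choose (i + 1) * ν.choose i * 2 ^ (ν - i)) + Bsum e ν := by
  rw [Bsum, ← Finset.sum_add_distrib]
  apply Finset.sum_congr rfl
  intro i hi
  rw [Nat.choose_succ_succ]
  ring

lemma Brec (e ν : ℕ) :
    Bsum (e+1) (ν+1) + Bsum e ν = 2 * Bsum (e+1) ν + Bsum e (ν+1) := by
  rw [Bsum_succ (e+1) ν, Bsum_succ e ν, Wsucc]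
  ring

def Usum (e μ : ℕ) : ℕ := ∑ m ∈ range (μ + 1), 2 ^ m * Bsum e (μ - m)

lemma Usum_succ (e μ : ℕ) : Usum e (μ+1) = Bsum e (μ+1) + 2 * Usum e μ := by
  rw [Usum, Finset.sum_range_succ' (fun m => 2 ^ m * Bsum e (μ + 1 - m)) (μ+1)]
  simp only [Nat.sub_zero, pow_zero, one_mul]
  rw [Usum, Finset.mul_sum]
  rw [add_comm]
  congr 1
  apply Finset.sum_congr rfl
  intro m hm
  have : μ + 1 - (m + 1) = μ - m := by omega
  rw [this, pow_succ]; ring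

lemma Usum_eq (e μ : ℕ) : Usum e μ + Bsum e (μ+1) = Bsum (e+1) (μ+1) := by
  induction μ with
  | zero =>
    show Usum e 0 + Bsum e 1 = Bsum (e+1) 1
    have h0 : Usum e 0 = 1 := by simp [Usum, Bsum_zero]
    have h1 : ∀ f : ℕ, Bsum f 1 = 2 + f := by
      intro f
      rw [Bsum]
      rw [Finset.sum_range_succ, Finset.sum_range_succ, Finset.sum_range_zero]
      simp [Nat.choose_one_right]
    rw [h0, h1, h1]
    omega
  | succ ν ih =>
    rw [Usum_succ]
    have hr := Brec e (ν+1)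
    omega

lemma conv (e μ : ℕ) :
    ∑ m ∈ range (μ + 1), hwt m * Bsum e (μ - m) = Bsum (e+1) μ := by
  cases μ with
  | zero => simp [hwt, Bsum_zero]
  | succ ν =>
    rw [Finset.sum_range_succ' (fun m => hwt m * Bsum e (ν + 1 - m)) (ν+1)]
    have h1 : ∀ m ∈ range (ν+1), hwt (m+1) * Bsum e (ν + 1 - (m+1)) = 2^m * Bsum e (ν - m) := by
      intro m hm
      have : ν + 1 - (m+1) = ν - m := by omega
      rw [this]; simp [hwt]
    rw [Finset.sum_congr rfl h1]
    have h2 : hwt 0 * Bsum e (ν+1-0) = Bsum e (ν+1) := by simp [hwt]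
    rw [h2, ← Usum]
    exact Usum_eq e ν


def Mset (d μ : ℕ) : Finset (Fin d → ℕ) :=
  (Fintype.piFinset fun _ => range (μ + 1)).filter fun m => ∑ k, m k ≤ μ

def Asum (d μ : ℕ) : ℕ := ∑ m ∈ Mset d μ, ∏ k, hwt (m k)

lemma hwt_sum (μ : ℕ) : ∑ m ∈ range (μ + 1), hwt m = 2 ^ μ := by
  induction μ with
  | zero => simp [hwt]
  | succ ν ih =>
    rw [Finset.sum_range_succ, ih]
    simp [hwt, pow_succ]
    omega

lemma Asum_one (μ : ℕ) : Asum 1 μ = 2 ^ μ := by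
  rw [← hwt_sum μ, Asum]
  apply Finset.sum_nbij' (i := fun m => m 0) (j := fun n => fun _ => n)
  · intro m hm
    simp only [Mset, mem_filter, Fintype.mem_piFinset] at hm
    simpa using hm.1 0
  · intro n hn
    simp only [mem_range] at hn
    simp only [Mset, mem_filter, Fintype.mem_piFinset]
    constructor
    · intro k; simpa using hn
    · simpa using Nat.lt_succ_iff.mp hn
  · intro m hm
    funext k
    have : k = 0 := Subsingleton.elim k 0
    rw [this]
  · intro n hn; rfl
  · intro m hm
    rw [Fin.prod_univ_one]

lemma Asum_succ (d μ : ℕ) :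
    Asum (d+1) μ = ∑ m ∈ range (μ + 1), hwt m * Asum d (μ - m) := by
  have key : Asum (d+1) μ =
      ∑ p ∈ (range (μ+1)).sigma (fun m0 => Mset d (μ - m0)),
        hwt p.1 * ∏ k, hwt (p.2 k) := by
    rw [Asum]
    apply Finset.sum_nbij' (i := fun m => ⟨m 0, Fin.tail m⟩)
      (j := fun p => Fin.cons p.1 p.2)
    · intro m hm
      simp only [Mset, mem_filter, Fintype.mem_piFinset, mem_range] at hm
      obtain ⟨hmem, hsum⟩ := hm
      rw [Fin.sum_univ_succ] at hsum
      simp only [mem_sigma, mem_range, Mset, mem_filter, Fintype.mem_piFinset, mem_range]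
      have htail : ∀ k : Fin d, Fin.tail m k ≤ ∑ k, Fin.tail m k := by
        intro k
        exact Finset.single_le_sum (f := fun k => Fin.tail m k) (fun _ _ => Nat.zero_le _)
          (Finset.mem_univ k)
      have hteq : ∑ k : Fin d, Fin.tail m k = ∑ i : Fin d, m i.succ := rfl
      refine ⟨by omega, fun k => ?_, by omega⟩
      have := htail k
      simp only [Fin.tail] at this ⊢
      omega
    · intro p hp
      simp only [mem_sigma, mem_range, Mset, mem_filter, Fintype.mem_piFinset, mem_range] at hp
      obtain ⟨h0, hmem, hsum⟩ := hp
      simp only [Mset, mem_filter, Fintype.mem_piFinset, mem_range]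
      constructor
      · intro k
        refine Fin.cases ?_ ?_ k
        · simpa using h0
        · intro i
          simp only [Fin.cons_succ]
          have := hmem i
          omega
      · rw [Fin.sum_univ_succ]
        simp only [Fin.cons_zero, Fin.cons_succ]
        omega
    · intro m hm
      exact Fin.cons_self_tail m
    · intro p hp
      simp
    · intro m hm
      rw [Fin.prod_univ_succ]
      rfl
  rw [key, Finset.sum_sigma]
  apply Finset.sum_congr rfl
  intro m0 _
  rw [Asum, Finset.mul_sum]

lemma Asum_eq_Bsum : ∀ d, 1 ≤ d → ∀ μ, Asum d μ = Bsum (d - 1) μ := by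
  intro d
  induction d with
  | zero => intro h; exact absurd h (by omega)
  | succ n ih =>
    intro _ μ
    cases n with
    | zero => rw [Asum_one]; exact (Bsum_zero_left μ).symm
    | succ n' =>
      rw [Asum_succ]
      have h1 : ∀ m ∈ range (μ+1), hwt m * Asum (n'+1) (μ - m) = hwt m * Bsum n' (μ - m) := by
        intro m _
        rw [ih (by omega)]
        norm_num
      rw [Finset.sum_congr rfl h1]
      exact conv n' μ

noncomputable def Dset (S : ℕ → Finset ℝ) (μ m : ℕ) : Finset ℝ :=
  (S (μ + 1)).filter fun t => lev S t = m

def Lset (d μ : ℕ) : Finset (Fin d → ℕ) :=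
  (Fintype.piFinset fun _ : Fin d => Finset.Icc 1 (μ + 1)).filter fun l => ∑ k, l k ≤ d + μ

section Struct2
variable {S : ℕ → Finset ℝ} (hS : ∀ k, 1 ≤ k → S k ⊆ S (k + 1))

lemma filter_eq_biUnion (d μ : ℕ) :
    (Fintype.piFinset fun _ : Fin d => S (μ + 1)).filter
        (fun x => ∑ k, lev S (x k) ≤ d + μ)
      = (Lset d μ).biUnion fun l => Fintype.piFinset fun k => Dset S μ (l k) := by
  ext x
  simp only [mem_filter, mem_biUnion, Fintype.mem_piFinset, Dset, Lset, mem_Icc]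
  constructor
  · rintro ⟨hx, hsum⟩
    refine ⟨fun k => lev S (x k), ⟨fun k => ?_, hsum⟩, fun k => ?_⟩
    · exact ⟨(lev_spec (by omega) (hx k)).1, lev_le (by omega) (hx k)⟩
    · exact ⟨hx k, rfl⟩
  · rintro ⟨l, ⟨hl, hsum⟩, hx⟩
    have hx' : ∀ k, x k ∈ S (μ+1) ∧ lev S (x k) = l k := hx
    refine ⟨fun k => (hx' k).1, ?_⟩
    calc ∑ k, lev S (x k) = ∑ k, l k := by
          apply Finset.sum_congr rfl; intro k _; exact (hx' k).2
      _ ≤ d + μ := hsum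

include hS in
lemma Dset_card (hS_card : ∀ k, 1 ≤ k → (S k).card = 2 ^ (k - 1))
    (μ m : ℕ) (h1m : 1 ≤ m) (hm : m ≤ μ + 1) :
    (Dset S μ m).card = hwt (m - 1) := by
  match m, h1m with
  | 1, _ =>
    have heq : Dset S μ 1 = S 1 := by
      ext t
      simp only [Dset, mem_filter]
      constructor
      · rintro ⟨ht, hlev⟩
        have := (lev_spec (k := μ+1) (by omega) ht).2
        rwa [hlev] at this
      · intro ht
        refine ⟨S_mono hS 1 (μ+1) (by omega) (by omega) ht, ?_⟩
        have h1 := lev_le (k := 1) (by omega) ht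
        have h2 := (lev_spec (k := 1) (by omega) ht).1
        omega
    rw [heq, hS_card 1 (by omega)]
    simp [hwt]
  | (m'+2), _ =>
    have heq : Dset S μ (m'+2) = S (m'+2) \ S (m'+1) := by
      ext t
      simp only [Dset, mem_filter, mem_sdiff]
      constructor
      · rintro ⟨ht, hlev⟩
        have hmem := (lev_spec (k := μ+1) (by omega) ht).2
        rw [hlev] at hmem
        refine ⟨hmem, fun hmem' => ?_⟩
        have := lev_le (k := m'+1) (by omega) hmem'
        omega
      · rintro ⟨ht2, ht1⟩
        have hle := lev_le (k := m'+2) (by omega) ht2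
        have hspec := lev_spec (k := m'+2) (by omega) ht2
        refine ⟨S_mono hS (m'+2) (μ+1) (by omega) hm ht2, ?_⟩
        by_contra hne
        have hlt : lev S t ≤ m' + 1 := by omega
        exact ht1 (S_mono hS (lev S t) (m'+1) hspec.1 hlt hspec.2)
    rw [heq, Finset.card_sdiff_of_subset (S_mono hS (m'+1) (m'+2) (by omega) (by omega)),
      hS_card (m'+2) (by omega), hS_card (m'+1) (by omega)]
    have h2 : (2:ℕ) ^ (m'+2-1) = 2 * 2 ^ (m'+1-1) := by
      simp [pow_succ]; ring
    simp only [hwt]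
    have : ¬ (m' + 2 - 1 = 0) := by omega
    rw [if_neg this]
    have h3 : (2:ℕ) ^ (m' + 2 - 1 - 1) = 2 ^ (m' + 1 - 1) := by norm_num
    omega

include hS in
lemma card_eq_Asum (hS_card : ∀ k, 1 ≤ k → (S k).card = 2 ^ (k - 1))
    (d μ : ℕ) (hd : 1 ≤ d) : smolyakCard S d μ = Asum d μ := by
  rw [smolyakCard, grid_eq hS d μ hd, filter_eq_biUnion d μ]
  rw [Finset.card_biUnion]
  · have step1 : ∀ l ∈ Lset d μ,
        (Fintype.piFinset fun k => Dset S μ (l k)).card = ∏ k, hwt (l k - 1) := by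
      intro l hl
      rw [Fintype.card_piFinset]
      apply Finset.prod_congr rfl
      intro k _
      simp only [Lset, mem_filter, Fintype.mem_piFinset, mem_Icc] at hl
      exact Dset_card hS hS_card μ (l k) (hl.1 k).1 (hl.1 k).2
    rw [Finset.sum_congr rfl step1, Asum]
    apply Finset.sum_nbij' (i := fun l => fun k => l k - 1) (j := fun m => fun k => m k + 1)
    · intro l hl
      simp only [Lset, mem_filter, Fintype.mem_piFinset, mem_Icc] at hl
      simp only [Mset, mem_filter, Fintype.mem_piFinset, mem_range]
      have hsum : ∑ k, (l k - 1 + 1) = ∑ k, l k := by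
        apply Finset.sum_congr rfl
        intro k _
        have := (hl.1 k).1
        omega
      have hd2 : ∑ k, (l k - 1 + 1) = (∑ k, (l k - 1)) + d := by
        rw [Finset.sum_add_distrib]
        simp
      refine ⟨fun k => ?_, ?_⟩
      · show l k - 1 < μ + 1
        have := (hl.1 k).1; have := (hl.1 k).2; omega
      · show (∑ k, (l k - 1)) ≤ μ
        have := hl.2; omega
    · intro m hm
      simp only [Mset, mem_filter, Fintype.mem_piFinset, mem_range] at hm
      simp only [Lset, mem_filter, Fintype.mem_piFinset, mem_Icc]
      have hd2 : ∑ k, (m k + 1) = (∑ k, m k) + d := by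
        rw [Finset.sum_add_distrib]
        simp
      refine ⟨fun k => ⟨?_, ?_⟩, ?_⟩
      · show 1 ≤ m k + 1; omega
      · show m k + 1 ≤ μ + 1; have := hm.1 k; omega
      · show (∑ k, (m k + 1)) ≤ d + μ; have := hm.2; omega
    · intro l hl
      simp only [Lset, mem_filter, Fintype.mem_piFinset, mem_Icc] at hl
      funext k
      show l k - 1 + 1 = l k
      have := (hl.1 k).1
      omega
    · intro m hm
      funext k
      show m k + 1 - 1 = m k
      omega
    · intro l hl
      apply Finset.prod_congr rfl
      intro k _
      rfl
  · intro l hl l' hl' hne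
    apply Finset.disjoint_left.mpr
    intro x hx hx'
    simp only [Fintype.mem_piFinset, Dset, mem_filter] at hx hx'
    apply hne
    funext k
    rw [← (hx k).2, ← (hx' k).2]

end Struct2


/-- For the growth function `f(k) = 2^(k-1)`, the nested Smolyak grid has
`N(d, μ) = ∑_{j=0}^{min(d-1, μ)} C(d-1, j) C(μ, j) 2^(μ-j)` nodes. -/
theorem smolyakCard_of_two_pow_pred
    (S : ℕ → Finset ℝ) (hS_nested : ∀ k, 1 ≤ k → S k ⊆ S (k + 1))
    (hS_card : ∀ k, 1 ≤ k → (S k).card = 2 ^ (k - 1))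
    (d μ : ℕ) (hd : 1 ≤ d) :
    smolyakCard S d μ =
      ∑ j ∈ Finset.range (min (d - 1) μ + 1),
        (d - 1).choose j * μ.choose j * 2 ^ (μ - j) := by
  rw [card_eq_Asum hS_nested hS_card d μ hd, Asum_eq_Bsum d hd μ, Bsum]
  apply (Finset.sum_subset ?_ ?_).symm
  · intro j hj
    simp only [mem_range] at hj ⊢
    omega
  · intro j hj hj'
    simp only [mem_range] at hj hj'
    have : d - 1 < j := by omega
    rw [Nat.choose_eq_zero_of_lt this]
    ring
end

section
/- For all integers n ≥ 2, d ≥ 1 and μ ≥ 0, the following identity of integers holds: Σ_{k=0}^{min(d,μ)} C(d,k) · (−2n)^k · (n+1)^{d−k} · Σ_{ℓ=0}^{μ−k} C(d+ℓ−1, ℓ) · n^ℓ = 2^d + Σ_{k=1}^{d} C(d,k) · 2^{d−k} · (n−1)^k · Σ_{ℓ=0}^{μ} C(k+ℓ−1, k−1) · n^ℓ. -/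
/-! Both sides are the coefficient of `X ^ μ` in `(n + 1 - 2nX) ^ d / ((1 - nX) ^ d (1 - X))`.
Expanding `(n + 1 - 2nX) ^ d` binomially in `X` gives the left side. Writing instead
`n + 1 - 2nX = (n - 1) + 2 (1 - nX)`, the `k`-th binomial term cancels `(1 - nX) ^ (d - k)` against
the denominator, leaving `1 / ((1 - nX) ^ k (1 - X))`, whose coefficients are the inner sums on the
right; the term `k = 0` contributes `2 ^ d`. -/

open PowerSeries Finset

namespace PowerSeries

variable {R : Type*} [CommRing R]

theorem coeff_mul_mk_one (f : R⟦X⟧) (m : ℕ) :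
    coeff m (f * mk 1) = ∑ i ∈ range (m + 1), coeff i f := by
  simp [coeff_mul, Finset.Nat.sum_antidiagonal_eq_sum_range_succ (fun i _ => coeff i f)]

/-- With truncated subtraction the formula also holds for `d = 0`. -/
theorem coeff_invOneSubPow (d ℓ : ℕ) :
    coeff ℓ (invOneSubPow R d : R⟦X⟧) = ((d + ℓ - 1).choose ℓ : R) := by
  cases d with
  | zero => cases ℓ <;> simp [invOneSubPow_zero, coeff_one]
  | succ e =>
    rw [invOneSubPow_val_succ_eq_mk_add_choose, coeff_mk, Nat.add_right_comm, Nat.add_sub_cancel,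
      Nat.choose_symm_add]

theorem coeff_rescale_invOneSubPow_mul_mk_one (a : R) (d m : ℕ) :
    coeff m (rescale a (invOneSubPow R d : R⟦X⟧) * mk 1) =
      ∑ ℓ ∈ range (m + 1), ((d + ℓ - 1).choose ℓ : R) * a ^ ℓ := by
  simp only [coeff_mul_mk_one, coeff_rescale, coeff_invOneSubPow, mul_comm]

theorem one_sub_C_mul_X_pow_mul_rescale_invOneSubPow (a : R) (k e : ℕ) :
    (1 - C a * X) ^ e * rescale a (invOneSubPow R (k + e) : R⟦X⟧) =
      rescale a (invOneSubPow R k : R⟦X⟧) := by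
  rw [← one_sub_pow_mul_invOneSubPow_val_add_eq_invOneSubPow_val R k e, map_mul, map_pow, map_sub,
    map_one, rescale_X]

theorem coeff_C_add_C_mul_X_pow_mul (b c : R) (d μ : ℕ) (g : R⟦X⟧) :
    coeff μ ((C b + C c * X) ^ d * g) =
      ∑ k ∈ range (min d μ + 1), (d.choose k : R) * c ^ k * b ^ (d - k) * coeff (μ - k) g := by
  have hterm (k : ℕ) : coeff μ ((C c * X) ^ k * C b ^ (d - k) * (d.choose k : R⟦X⟧) * g) =
      if k ≤ μ then (d.choose k : R) * c ^ k * b ^ (d - k) * coeff (μ - k) g else 0 := by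
    rw [show (C c * X) ^ k * C b ^ (d - k) * (d.choose k : R⟦X⟧) * g =
        C ((d.choose k : R) * c ^ k * b ^ (d - k)) * (X ^ k * g) by
          simp only [map_mul, map_pow, map_natCast]; ring,
      coeff_C_mul, coeff_X_pow_mul', mul_ite, mul_zero]
  rw [add_comm, add_pow, sum_mul, map_sum]
  simp only [hterm, ← sum_filter]
  congr 1
  ext k
  simp only [mem_filter, mem_range]
  omega

theorem C_add_C_mul_one_sub_C_mul_X_pow_mul_rescale_invOneSubPow (a b c : R) (d : ℕ) :
    (C b + C c * (1 - C a * X)) ^ d * rescale a (invOneSubPow R d : R⟦X⟧) =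
      ∑ k ∈ range (d + 1),
        C ((d.choose k : R) * c ^ (d - k) * b ^ k) * rescale a (invOneSubPow R k : R⟦X⟧) := by
  rw [add_pow, sum_mul]
  refine sum_congr rfl fun k hk => ?_
  rw [← one_sub_C_mul_X_pow_mul_rescale_invOneSubPow a k (d - k),
    Nat.add_sub_cancel' (Nat.le_of_lt_succ (mem_range.mp hk))]
  simp only [mul_pow, map_mul, map_pow, map_natCast]
  ring

end PowerSeries

theorem pow_add_one_growth_count_identity_general (n : ℤ) (d μ : ℕ) :
    ∑ k ∈ Finset.range (min d μ + 1),
        (d.choose k : ℤ) * (-2 * n) ^ k * (n + 1) ^ (d - k) *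
          ∑ ℓ ∈ Finset.range (μ - k + 1), ((d + ℓ - 1).choose ℓ : ℤ) * n ^ ℓ =
      2 ^ d + ∑ k ∈ Finset.Icc 1 d,
        (d.choose k : ℤ) * 2 ^ (d - k) * (n - 1) ^ k *
          ∑ ℓ ∈ Finset.range (μ + 1), ((k + ℓ - 1).choose (k - 1) : ℤ) * n ^ ℓ := by
  set g : ℤ⟦X⟧ := rescale n (invOneSubPow ℤ d : ℤ⟦X⟧) * PowerSeries.mk 1
  have hsplit : C (n + 1) + C (-2 * n) * X = C (n - 1) + C 2 * (1 - C n * X) := by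
    simp only [map_add, map_sub, map_mul, map_neg, map_one, map_ofNat]
    ring
  calc _ = coeff μ ((C (n + 1) + C (-2 * n) * X) ^ d * g) := by
        simp only [g, coeff_C_add_C_mul_X_pow_mul, coeff_rescale_invOneSubPow_mul_mk_one]
    _ = coeff μ ((C (n - 1) + C 2 * (1 - C n * X)) ^ d * g) := by rw [hsplit]
    _ = _ := by
      rw [← mul_assoc, C_add_C_mul_one_sub_C_mul_X_pow_mul_rescale_invOneSubPow, sum_mul, map_sum,
        range_eq_Ico, sum_eq_sum_Ico_succ_bot d.succ_pos, zero_add, Nat.succ_eq_add_one,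
        Ico_add_one_right_eq_Icc]
      congr 1
      · rw [mul_assoc, coeff_C_mul]
        simp [invOneSubPow_zero]
      · refine sum_congr rfl fun k hk => ?_
        have hk1 : 1 ≤ k := (mem_Icc.mp hk).1
        rw [mul_assoc, coeff_C_mul, coeff_rescale_invOneSubPow_mul_mk_one]
        congr 1
        refine sum_congr rfl fun ℓ _ => ?_
        rw [Nat.choose_symm_of_eq_add (a := ℓ) (b := k - 1) (by omega)]

/-- The identity
`∑_{k=0}^{min(d,μ)} C(d,k) (-2n)ᵏ (n+1)^(d-k) ∑_{ℓ=0}^{μ-k} C(d+ℓ-1, ℓ) nˡ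
  = 2^d + ∑_{k=1}^{d} C(d,k) 2^(d-k) (n-1)ᵏ ∑_{ℓ=0}^{μ} C(k+ℓ-1, k-1) nˡ`
for integers `n ≥ 2`, `d ≥ 1` and `μ ≥ 0`. -/
theorem pow_add_one_growth_count_identity (n : ℤ) (hn : 2 ≤ n) (d μ : ℕ) (hd : 1 ≤ d) :
    ∑ k ∈ Finset.range (min d μ + 1),
        (d.choose k : ℤ) * (-2 * n) ^ k * (n + 1) ^ (d - k) *
          ∑ ℓ ∈ Finset.range (μ - k + 1), ((d + ℓ - 1).choose ℓ : ℤ) * n ^ ℓ =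
      2 ^ d + ∑ k ∈ Finset.Icc 1 d,
        (d.choose k : ℤ) * 2 ^ (d - k) * (n - 1) ^ k *
          ∑ ℓ ∈ Finset.range (μ + 1), ((k + ℓ - 1).choose (k - 1) : ℤ) * n ^ ℓ :=
  pow_add_one_growth_count_identity_general n d μ
end

section
/- Let f(k) = k and let m = max(0, μ+1−d). Then for every d ≥ 1 and μ ≥ 0, 2d · 𝒩_Σ(d,μ,f) = (1+μ) · C(2d+μ, μ+1) − m · C(2d+m−1, m). -/
/-!
Since `∑ⱼ j xʲ = x / (1 - x)²`, the weighted count `∑_{|i| = n} ∏ₖ iₖ` over `i : Fin d → ℕ`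
is the coefficient of `xⁿ` in `xᵈ / (1 - x)^(2d)`, namely `C(n + d - 1, 2d - 1)`; indices with
a zero entry contribute nothing, so the constraint `i ≥ 1` is free. Summing over
`max(d, μ+1) ≤ n ≤ d + μ` with the hockey-stick identity gives
`𝒩_Σ = C(2d + μ, 2d) - C(2d + m - 1, 2d)`, and `a · C(a + b - 1, a) = b · C(a + b - 1, b)`
turns both terms into the stated form.
-/

open Finset PowerSeries

/-- Multi-indices `i : Fin d → ℕ` with `i k ≥ 1` for all `k` and
`max d (μ+1) ≤ ∑ k, i k ≤ d + μ`. -/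
def smolyakSigmaIndices (d μ : ℕ) : Finset (Fin d → ℕ) :=
  (Fintype.piFinset fun _ => Finset.Icc 1 (d + μ)).filter fun i =>
    max d (μ + 1) ≤ ∑ k, i k ∧ ∑ k, i k ≤ d + μ

/-- `𝒩_Σ(d, μ, f) = ∑_{max(d, μ+1) ≤ |i| ≤ d + μ, i ≥ 1} ∏ₖ f(iₖ)`. -/
def calNSigma (f : ℕ → ℕ) (d μ : ℕ) : ℕ :=
  ∑ i ∈ smolyakSigmaIndices d μ, ∏ k, f (i k)

theorem PowerSeries.coeff_pow_eq_sum_antidiagonalTuple {R : Type*} [CommSemiring R]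
    (φ : R⟦X⟧) (d n : ℕ) :
    coeff n (φ ^ d) = ∑ i ∈ Nat.antidiagonalTuple d n, ∏ k, coeff (i k) φ := by
  rw [← Fin.prod_const, coeff_prod, finsuppAntidiag, sum_map,
    ← piAntidiag_univ_fin_eq_antidiagonalTuple]
  exact sum_attach (piAntidiag univ n) fun i => ∏ k, coeff (i k) φ

theorem PowerSeries.mk_natCast_eq_X_mul_mk_one_sq {R : Type*} [CommRing R] :
    (mk fun n => (n : R)) = X * (mk 1) ^ 2 := by
  rw [mk_one_pow_eq_mk_choose_add R 1]
  ext (_ | n) <;> simp [coeff_succ_X_mul, add_comm]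

theorem PowerSeries.coeff_mk_natCast_pow {R : Type*} [CommRing R] (e n : ℕ) :
    coeff n ((mk fun j => (j : R)) ^ (e + 1)) = ((n + e).choose (2 * e + 1) : R) := by
  rw [mk_natCast_eq_X_mul_mk_one_sq, mul_pow, ← pow_mul, coeff_X_pow_mul',
    show 2 * (e + 1) = 2 * e + 1 + 1 by ring, mk_one_pow_eq_mk_choose_add R, coeff_mk]
  split_ifs with h
  · congr 2; omega
  · rw [Nat.choose_eq_zero_of_lt (by omega), Nat.cast_zero]

theorem Nat.sum_Ico_choose_add_choose {a b : ℕ} (k : ℕ) (hab : a ≤ b) :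
    ∑ m ∈ Ico a b, m.choose k + a.choose (k + 1) = b.choose (k + 1) := by
  induction b, hab using Nat.le_induction with
  | base => simp
  | succ b hab ih => rw [sum_Ico_succ_top hab, add_right_comm, ih, choose_succ_succ', add_comm]

theorem Nat.mul_choose_add_sub_one_comm (a b : ℕ) :
    a * (a + b - 1).choose a = b * (a + b - 1).choose b := by
  rcases a with _ | a
  · rcases b with _ | b <;> simp
  rcases b with _ | b
  · simp
  have ha := add_one_mul_choose_eq (a + b) a
  have hb := add_one_mul_choose_eq (a + b) b
  rw [choose_symm_add] at ha
  rw [show a + 1 + (b + 1) - 1 = a + b + 1 by omega, mul_comm, ← ha, hb, mul_comm]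

theorem calNSigma_eq_sum_antidiagonalTuple {f : ℕ → ℕ} (hf : f 0 = 0) (d μ : ℕ) :
    calNSigma f d μ =
      ∑ n ∈ Icc (max d (μ + 1)) (d + μ), ∑ i ∈ Nat.antidiagonalTuple d n, ∏ k, f (i k) := by
  have hmaps : ∀ i ∈ smolyakSigmaIndices d μ, ∑ k, i k ∈ Icc (max d (μ + 1)) (d + μ) :=
    fun i hi => mem_Icc.2 (mem_filter.1 hi).2
  rw [calNSigma, ← sum_fiberwise_of_maps_to hmaps]
  refine sum_congr rfl fun n hn => sum_subset (fun i hi => ?_) fun i hi hi' => ?_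
  · exact Nat.mem_antidiagonalTuple.2 (mem_filter.1 hi).2
  · have hsum := Nat.mem_antidiagonalTuple.1 hi
    have hle : ∀ k, i k ≤ n := fun k => hsum ▸ single_le_sum (fun _ _ => Nat.zero_le _) (mem_univ k)
    obtain ⟨k, hk⟩ : ∃ k, i k = 0 := by
      by_contra! hpos
      simp only [smolyakSigmaIndices, mem_filter, Fintype.mem_piFinset, mem_Icc, hsum] at hi' hn
      exact hi' ⟨⟨fun k => ⟨Nat.one_le_iff_ne_zero.2 (hpos k), (hle k).trans hn.2⟩, hn⟩, trivial⟩
    exact prod_eq_zero (mem_univ k) (by rw [hk, hf])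

theorem Nat.sum_antidiagonalTuple_prod_eq_choose (e n : ℕ) :
    ∑ i ∈ Nat.antidiagonalTuple (e + 1) n, ∏ k, i k = (n + e).choose (2 * e + 1) := by
  apply Nat.cast_injective (R := ℤ)
  push_cast
  rw [← coeff_mk_natCast_pow, coeff_pow_eq_sum_antidiagonalTuple]
  simp only [coeff_mk]

theorem calNSigma_id_add_choose (d μ : ℕ) :
    calNSigma (fun k => k) d μ + (2 * d + (μ + 1 - d) - 1).choose (2 * d) =
      (2 * d + μ).choose (2 * d) := by
  rcases d with _ | e
  · simp [calNSigma_eq_sum_antidiagonalTuple]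
  have hsum : calNSigma (fun k => k) (e + 1) μ =
      ∑ m ∈ Ico (max (e + 1) (μ + 1) + e) (e + 1 + μ + 1 + e), m.choose (2 * e + 1) := by
    rw [calNSigma_eq_sum_antidiagonalTuple rfl, ← Ico_add_one_right_eq_Icc, ← sum_Ico_add']
    exact sum_congr rfl fun n _ => Nat.sum_antidiagonalTuple_prod_eq_choose e n
  rw [show 2 * (e + 1) + (μ + 1 - (e + 1)) - 1 = max (e + 1) (μ + 1) + e by omega,
    show 2 * (e + 1) + μ = e + 1 + μ + 1 + e by omega, show 2 * (e + 1) = 2 * e + 1 + 1 by ring,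
    hsum]
  exact Nat.sum_Ico_choose_add_choose (2 * e + 1) (by omega)

theorem calNSigma_of_id_general (d μ : ℕ) :
    (2 * d * calNSigma (fun k => k) d μ : ℤ) =
      (1 + μ : ℤ) * ((2 * d + μ).choose (μ + 1) : ℤ) -
        (μ + 1 - d : ℕ) * (((2 * d + (μ + 1 - d) - 1).choose (μ + 1 - d) : ℕ) : ℤ) := by
  have hfull := Nat.mul_choose_add_sub_one_comm (2 * d) (μ + 1)
  have htail := Nat.mul_choose_add_sub_one_comm (2 * d) (μ + 1 - d)
  rw [show 2 * d + (μ + 1) - 1 = 2 * d + μ by omega] at hfull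
  have hscaled : 2 * d * calNSigma (fun k => k) d μ +
      (μ + 1 - d) * (2 * d + (μ + 1 - d) - 1).choose (μ + 1 - d) =
      (μ + 1) * (2 * d + μ).choose (μ + 1) := by
    rw [← htail, ← hfull, ← calNSigma_id_add_choose d μ, Nat.mul_add (2 * d)]
  rw [eq_sub_iff_add_eq, add_comm (1 : ℤ)]
  exact_mod_cast hscaled

/-- For `f(k) = k` and `m = max(0, μ+1-d)`,
`2d · 𝒩_Σ(d, μ, f) = (1+μ) C(2d+μ, μ+1) - m C(2d+m-1, m)` (an identity in `ℤ`). -/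
theorem calNSigma_of_id (d μ : ℕ) (hd : 1 ≤ d) :
    (2 * d * calNSigma (fun k => k) d μ : ℤ) =
      (1 + μ : ℤ) * ((2 * d + μ).choose (μ + 1) : ℤ) -
        (μ + 1 - d : ℕ) * (((2 * d + (μ + 1 - d) - 1).choose (μ + 1 - d) : ℕ) : ℤ) :=
  calNSigma_of_id_general d μ
end

section
/- Suppose the growth function is f(k) = 2k − 1. Then for every d ≥ 1 and μ ≥ 0, the cardinality of the nested Smolyak grid is N(d,μ) = Σ_{k=0}^{min(d,μ)} C(μ,k) · C(μ+d−k, μ). -/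
/-!
Splitting every `S k` into the nodes that first appear at level `k` (one node at level `1`, two
at every later level), the grid becomes a disjoint union of boxes indexed by the tuples
`m : Fin d → ℕ` with `∑ m ≤ μ`, the box of `m` having `∏ k, (if m k = 0 then 1 else 2)` points.
This weighted count is the number of points of `ℤ^d` in the `ℓ¹`-ball of radius `μ`, the Delannoy
number `D(d, μ)`: splitting off one coordinate shows that it satisfies the Delannoy recurrence
`D(d+1, n+1) = D(d, n+1) + D(d+1, n) + D(d, n)`, and two applications of Pascal's rule show
that the binomial sum does too.
-/

open Finset

def delannoy : ℕ → ℕ → ℕ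
  | 0, _ => 1
  | _ + 1, 0 => 1
  | d + 1, n + 1 => delannoy d (n + 1) + delannoy (d + 1) n + delannoy d n

theorem delannoy_eq_sum_antidiagonal (d n : ℕ) :
    delannoy d n = ∑ p ∈ antidiagonal n, n.choose p.1 * (p.2 + d).choose n := by
  induction d generalizing n with
  | zero =>
    rw [delannoy, sum_eq_single (0, n)]
    · simp
    · rintro ⟨k, j⟩ hkj hne
      have : j < n := by
        simp only [HasAntidiagonal.mem_antidiagonal, ne_eq, Prod.mk.injEq] at hkj hne
        omega
      simp [Nat.choose_eq_zero_of_lt this]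
    · simp
  | succ d ihd =>
    induction n with
    | zero => simp [delannoy]
    | succ n ihn =>
      rw [delannoy, ihd, ihd, ihn]
      have hPascal : ∑ p ∈ antidiagonal (n + 1),
          (n + 1).choose p.1 * (p.2 + (d + 1)).choose (n + 1) =
          ∑ p ∈ antidiagonal (n + 1), (n + 1).choose p.1 * (p.2 + d).choose n +
          ∑ p ∈ antidiagonal (n + 1), (n + 1).choose p.1 * (p.2 + d).choose (n + 1) := by
        rw [← sum_add_distrib]
        refine sum_congr rfl fun p _ => ?_
        rw [← add_assoc, Nat.choose_succ_succ', mul_add]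
      -- Peeling the first and the last term off `∑_{k + j = n + 1} C(n, k) C(j + d, n)`.
      have hT := Nat.sum_antidiagonal_succ (n := n)
        (f := fun p : ℕ × ℕ => (n + 1).choose p.1 * (p.2 + d).choose n)
      have hU := Nat.sum_antidiagonal_succ (n := n)
        (f := fun p : ℕ × ℕ => n.choose p.1 * (p.2 + d).choose n)
      have hU' := Nat.sum_antidiagonal_succ' (n := n)
        (f := fun p : ℕ × ℕ => n.choose p.1 * (p.2 + d).choose n)
      simp only [Nat.choose_succ_succ', add_mul, sum_add_distrib, Nat.choose_zero_right,
        Nat.choose_succ_self, zero_mul, zero_add, one_mul, add_right_comm _ 1 d] at hT hU hU'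
      rw [hPascal, hT]
      simp only [← add_assoc]
      omega

theorem delannoy_eq_sum_range (d n : ℕ) :
    delannoy d n = ∑ k ∈ range (min d n + 1), n.choose k * (n + d - k).choose n := by
  rw [delannoy_eq_sum_antidiagonal, Nat.sum_antidiagonal_eq_sum_range_succ_mk]
  symm
  refine sum_subset_zero_on_sdiff (range_subset_range.2 (by omega)) (fun k hk => ?_)
    (fun k hk => ?_)
  · simp only [mem_sdiff, mem_range] at hk
    rw [Nat.choose_eq_zero_of_lt (by omega : n - k + d < n), mul_zero]
  · rw [mem_range] at hk
    rw [Nat.sub_add_comm (by omega)]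

def sumLETuples (d n : ℕ) : Finset (Fin d → ℕ) :=
  {m ∈ Fintype.piFinset fun _ => range (n + 1) | ∑ k, m k ≤ n}

@[simp]
theorem mem_sumLETuples {d n : ℕ} {m : Fin d → ℕ} : m ∈ sumLETuples d n ↔ ∑ k, m k ≤ n := by
  simp only [sumLETuples, mem_filter, Fintype.mem_piFinset, mem_range, and_iff_right_iff_imp]
  exact fun h k => (single_le_sum (fun _ _ => Nat.zero_le _) (mem_univ k)).trans_lt
    (Nat.lt_succ_of_le h)

/-- `#{z : Fin d → ℤ | ∑ k, |z k| ≤ n}`, counted by the absolute values `m k = |z k|`, each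
nonzero one coming from two integers. -/
def l1BallCount (d n : ℕ) : ℕ :=
  ∑ m ∈ sumLETuples d n, ∏ k, if m k = 0 then 1 else 2

theorem l1BallCount_zero_left (n : ℕ) : l1BallCount 0 n = 1 := by
  have : sumLETuples 0 n = {0} := by ext m; simp [Subsingleton.elim m 0]
  simp [l1BallCount, this]

theorem l1BallCount_zero_right (d : ℕ) : l1BallCount d 0 = 1 := by
  have : sumLETuples d 0 = {0} := by ext m; simp [funext_iff]
  simp [l1BallCount, this]

theorem l1BallCount_succ_left (d n : ℕ) :
    l1BallCount (d + 1) n =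
      ∑ p ∈ antidiagonal n, (if p.1 = 0 then 1 else 2) * l1BallCount d p.2 := by
  simp only [l1BallCount, mul_sum, sum_sigma']
  refine sum_nbij' (fun m => ⟨(m 0, n - m 0), Fin.tail m⟩) (fun q => Fin.cons q.1.1 q.2)
    (fun m hm => ?_) (fun q hq => ?_) (fun m _ => Fin.cons_self_tail m) (fun q hq => ?_)
    (fun m _ => by rw [Fin.prod_univ_succ]; rfl)
  · simp only [mem_sumLETuples, Fin.sum_univ_succ] at hm
    simp only [mem_sigma, HasAntidiagonal.mem_antidiagonal, mem_sumLETuples, Fin.tail]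
    omega
  · obtain ⟨⟨a, b⟩, t⟩ := q
    simp only [mem_sigma, HasAntidiagonal.mem_antidiagonal, mem_sumLETuples] at hq
    simp only [mem_sumLETuples, Fin.sum_cons]
    omega
  · obtain ⟨⟨a, b⟩, t⟩ := q
    simp only [mem_sigma, HasAntidiagonal.mem_antidiagonal] at hq
    simp only [Fin.cons_zero, Fin.tail_cons, ← hq.1, Nat.add_sub_cancel_left]

theorem l1BallCount_succ_add (d n : ℕ) :
    l1BallCount (d + 1) n + l1BallCount d n = 2 * ∑ p ∈ antidiagonal n, l1BallCount d p.2 := by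
  have hfirst : l1BallCount d n =
      ∑ p ∈ antidiagonal n, if p.1 = 0 then l1BallCount d p.2 else 0 := by
    rw [sum_eq_single (0, n)] <;> aesop
  rw [l1BallCount_succ_left, hfirst, ← sum_add_distrib, mul_sum]
  refine sum_congr rfl fun p _ => ?_
  split_ifs <;> ring

theorem l1BallCount_succ_succ (d n : ℕ) :
    l1BallCount (d + 1) (n + 1) =
      l1BallCount d (n + 1) + l1BallCount (d + 1) n + l1BallCount d n := by
  have h := Nat.sum_antidiagonal_succ (n := n) (f := fun p => l1BallCount d p.2)
  have := l1BallCount_succ_add d (n + 1)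
  have := l1BallCount_succ_add d n
  simp only at h
  omega

theorem l1BallCount_eq_delannoy (d n : ℕ) : l1BallCount d n = delannoy d n := by
  induction d generalizing n with
  | zero => rw [l1BallCount_zero_left, delannoy]
  | succ d ihd =>
    induction n with
    | zero => rw [l1BallCount_zero_right, delannoy]
    | succ n ihn => rw [l1BallCount_succ_succ, delannoy, ihd, ihd, ihn]

theorem Fintype.exists_le_sum_eq_of_sum_le {ι : Type*} [Fintype ι] [DecidableEq ι] [Nonempty ι]
    {m : ι → ℕ} {N : ℕ} (h : ∑ k, m k ≤ N) : ∃ i, m ≤ i ∧ ∑ k, i k = N := by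
  obtain ⟨k₀⟩ := ‹Nonempty ι›
  refine ⟨m + Pi.single k₀ (N - ∑ k, m k), fun _ => Nat.le_add_right _ _, ?_⟩
  simp only [Pi.add_apply, sum_add_distrib, sum_pi_single']
  omega

theorem Monotone.mem_iff_exists_mem_disjointed {α : Type*} [DecidableEq α] {T : ℕ → Finset α}
    (hT : Monotone T) {n : ℕ} {y : α} : y ∈ T n ↔ ∃ m ≤ n, y ∈ disjointed T m := by
  have h : T n = partialSups (disjointed T) n := by rw [partialSups_disjointed, hT.partialSups_eq]
  rw [h, partialSups_apply, sup'_eq_sup, mem_sup]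
  simp only [mem_Iic]

/-! Levels are shifted to start at `0` here, as `S 0` is not constrained:
`disjointed (fun l => S (l + 1)) l` is the set of nodes that first appear in `S (l + 1)`. -/

section SmolyakGrid

variable {S : ℕ → Finset ℝ}

theorem smolyakGrid_eq_biUnion_disjointed (hS : Monotone fun l => S (l + 1)) {d : ℕ}
    (hd : 1 ≤ d) (μ : ℕ) :
    smolyakGrid S d μ = (sumLETuples d μ).biUnion fun m =>
      Fintype.piFinset fun k => disjointed (fun l => S (l + 1)) (m k) := by
  ext x
  simp only [smolyakGrid, smolyakIndices, mem_biUnion, mem_filter, Fintype.mem_piFinset, mem_Icc,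
    mem_sumLETuples]
  constructor
  · rintro ⟨i, ⟨hi_pos, hi_sum⟩, hx⟩
    have hlevel : ∀ k, ∃ l ≤ i k - 1, x k ∈ disjointed (fun l => S (l + 1)) l := fun k =>
      hS.mem_iff_exists_mem_disjointed.1 (by rw [Nat.sub_add_cancel (hi_pos k).1]; exact hx k)
    choose m hm_le hm_mem using hlevel
    refine ⟨m, ?_, hm_mem⟩
    have : ∑ k, (m k + 1) ≤ ∑ k, i k :=
      sum_le_sum fun k _ => by have := hm_le k; have := (hi_pos k).1; omega
    simp only [sum_add_distrib, sum_const, card_univ, Fintype.card_fin, smul_eq_mul,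
      mul_one] at this
    omega
  · rintro ⟨m, hm, hx⟩
    have : Nonempty (Fin d) := ⟨⟨0, hd⟩⟩
    obtain ⟨i, hmi, hi_sum⟩ := Fintype.exists_le_sum_eq_of_sum_le hm
    refine ⟨fun k => i k + 1, ⟨fun k => ⟨Nat.le_add_left _ _, ?_⟩, ?_⟩, fun k => ?_⟩
    · have := single_le_sum (fun _ _ => Nat.zero_le _) (mem_univ k) (f := i)
      dsimp only
      omega
    · simp [sum_add_distrib, hi_sum, add_comm]
    · exact hS (hmi k) (mem_of_subset (disjointed_le (fun l => S (l + 1)) _) (hx k))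

theorem smolyakCard_eq_sum_prod_card_disjointed (hS : Monotone fun l => S (l + 1)) {d : ℕ}
    (hd : 1 ≤ d) (μ : ℕ) :
    smolyakCard S d μ =
      ∑ m ∈ sumLETuples d μ, ∏ k, #(disjointed (fun l => S (l + 1)) (m k)) := by
  rw [smolyakCard, smolyakGrid_eq_biUnion_disjointed hS hd, card_biUnion]
  · simp only [Fintype.card_piFinset]
  · intro m _ m' _ hne
    obtain ⟨k, hk⟩ := Function.ne_iff.1 hne
    exact Fintype.piFinset_disjoint_of_disjoint _ _ (disjoint_disjointed _ hk)

theorem card_disjointed_of_card_eq_two_mul_sub_one (hS : Monotone fun l => S (l + 1))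
    (hS_card : ∀ k, 1 ≤ k → #(S k) = 2 * k - 1) (m : ℕ) :
    #(disjointed (fun l => S (l + 1)) m) = if m = 0 then 1 else 2 := by
  cases m with
  | zero => simp [hS_card 1 le_rfl]
  | succ m =>
    rw [hS.disjointed_add_one, card_sdiff_of_subset (hS m.le_succ), hS_card _ (by omega),
      hS_card _ (by omega), if_neg m.succ_ne_zero]
    omega

end SmolyakGrid

/-- For the growth function `f(k) = 2k - 1`, the nested Smolyak grid has
`N(d, μ) = ∑_{k=0}^{min(d, μ)} C(μ, k) C(μ+d-k, μ)` nodes. -/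
theorem smolyakCard_of_two_mul_sub_one
    (S : ℕ → Finset ℝ) (hS_nested : ∀ k, 1 ≤ k → S k ⊆ S (k + 1))
    (hS_card : ∀ k, 1 ≤ k → (S k).card = 2 * k - 1)
    (d μ : ℕ) (hd : 1 ≤ d) :
    smolyakCard S d μ =
      ∑ k ∈ Finset.range (min d μ + 1), μ.choose k * (μ + d - k).choose μ := by
  have hS : Monotone fun l => S (l + 1) :=
    monotone_nat_of_le_succ fun l => hS_nested (l + 1) l.succ_pos
  rw [smolyakCard_eq_sum_prod_card_disjointed hS hd, ← delannoy_eq_sum_range,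
    ← l1BallCount_eq_delannoy, l1BallCount]
  simp only [card_disjointed_of_card_eq_two_mul_sub_one hS hS_card]
end
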